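/- arXiv:1405.7299 — 2 statements merged into one kernel-verified Lean document; each statement's English description precedes it below -/
import Mathlib

section
/- For every cycle C in a graph and every positive integer s, the cycle (or the closed walk traversing it twice, if its length is odd) yields a closed walk witnessing that the graph containing C fails to be 2s-repeating; that is, any graph containing a cycle is not 2s-repeating for any s. -/
/-!
Let `c` be a cycle of length `n ≥ 3`. A sequence `p : ℕ → ℕ` with `p 0 = 0`, steps `±1` and
`n ∣ p L` traces the closed walk `i ↦ c.getVert (p i % n)` of length `L`, whose vertices at times
`i` and `i'` coincide iff `p i ≡ p i' [MOD n]`. So `G` is not `k`-repeating as soon as some such `p`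
with `L = j * k`, `j ≥ 2`, has `p i ≢ p (i + l)` whenever `0 < l < L` and `k ∣ l`.

If `n ∤ k`, go around the cycle: `p i = i` and `L = lcm n k`, since `n ∣ l` and `k ∣ l` force
`lcm n k ≤ l`. If `n ∣ k` and `k` is even, take `L = 2 * k`, so that only `l = k` matters, and
let `p` run `0, 1, 2, 1, 2, …, 2` for `k` steps, then climb to `N = lcm 2 n` and oscillate there:
the shift `p (i + k) - p i` is even and strictly between `0` and `N`, hence never a multiple of `n`.
-/

open SimpleGraph

/-- A graph `G` is `k`-repeating if every closed walk of length `j * k` with `j ≥ 2` has a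
proper closed subwalk whose length is a positive multiple of `k`. -/
def IsKRepeating {V : Type*} (G : SimpleGraph V) (k : ℕ) : Prop :=
  ∀ (v : V) (W : G.Walk v v) (j : ℕ), 2 ≤ j → W.length = j * k →
    ∃ i l : ℕ, 0 < l ∧ k ∣ l ∧ l < W.length ∧ i + l ≤ W.length ∧
      W.getVert i = W.getVert (i + l)

def climbZigzag (a i : ℕ) : ℕ := if i ≤ a then i else a - (i - a) % 2

def zigzagClimb (k N i : ℕ) : ℕ :=
  if i ≤ k then climbZigzag 2 i else 2 + climbZigzag (N - 2) (i - k)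

section zigzagClimb

variable {k N : ℕ}

theorem zigzagClimb_succ (hk : Even k) (hN : 3 ≤ N) {i : ℕ} (hi : i < 2 * k) :
    zigzagClimb k N (i + 1) = zigzagClimb k N i + 1 ∨
      zigzagClimb k N i = zigzagClimb k N (i + 1) + 1 := by
  obtain ⟨r, rfl⟩ := hk
  unfold zigzagClimb climbZigzag
  split_ifs <;> omega

theorem zigzagClimb_two_mul (hk : Even k) (hN : Even N) (hN2 : 2 ≤ N) (hNk : N ≤ k) :
    zigzagClimb k N (2 * k) = N := by
  obtain ⟨r, rfl⟩ := hk
  obtain ⟨t, rfl⟩ := hN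
  unfold zigzagClimb climbZigzag
  split_ifs <;> omega

theorem exists_zigzagClimb_add_self (hk : Even k) (hk0 : 0 < k) (hN : 4 ≤ N) {i : ℕ}
    (hi : i ≤ k) :
    ∃ d, zigzagClimb k N (i + k) = zigzagClimb k N i + d ∧ 0 < d ∧ d < N ∧ 2 ∣ d := by
  obtain ⟨r, rfl⟩ := hk
  refine ⟨zigzagClimb (r + r) N (i + (r + r)) - zigzagClimb (r + r) N i, ?_⟩
  unfold zigzagClimb climbZigzag
  split_ifs <;> omega

end zigzagClimb

namespace SimpleGraph

variable {V : Type*} {G : SimpleGraph V}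

theorem exists_walk_getVert_eq (f : ℕ → V) (L : ℕ) (hf : ∀ i < L, G.Adj (f i) (f (i + 1))) :
    ∃ W : G.Walk (f 0) (f L), W.length = L ∧ ∀ i ≤ L, W.getVert i = f i := by
  induction L generalizing f with
  | zero => exact ⟨.nil, rfl, fun i hi => by simp [Nat.le_zero.mp hi]⟩
  | succ L ih =>
    obtain ⟨W, hlen, hW⟩ := ih (fun i => f (i + 1)) fun i hi => hf (i + 1) (by omega)
    refine ⟨.cons (hf 0 L.succ_pos) W, by simp [hlen], fun i hi => ?_⟩
    cases i with
    | zero => simp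
    | succ i => simpa using hW i (by omega)

namespace Walk.IsCycle

variable {v : V} {c : G.Walk v v}

theorem getVert_mod_eq_iff (hc : c.IsCycle) {a b : ℕ} :
    c.getVert (a % c.length) = c.getVert (b % c.length) ↔ a ≡ b [MOD c.length] := by
  have hpos : 0 < c.length := by have := hc.three_le_length; omega
  refine ⟨fun h => hc.getVert_injOn' ?_ ?_ h, fun h => h ▸ rfl⟩
  · exact Nat.le_sub_one_of_lt (Nat.mod_lt a hpos)
  · exact Nat.le_sub_one_of_lt (Nat.mod_lt b hpos)

theorem adj_getVert_mod_succ (hc : c.IsCycle) (m : ℕ) :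
    G.Adj (c.getVert (m % c.length)) (c.getVert ((m + 1) % c.length)) := by
  have hpos : 0 < c.length := by have := hc.three_le_length; omega
  have hlt := Nat.mod_lt m hpos
  have hadj := c.adj_getVert_succ hlt
  rw [Nat.add_mod, Nat.mod_eq_of_lt (a := 1) (by have := hc.three_le_length; omega)]
  rcases (show m % c.length + 1 ≤ c.length from hlt).lt_or_eq with h | h
  · rwa [Nat.mod_eq_of_lt h]
  · rw [h, c.getVert_length] at hadj
    rwa [h, Nat.mod_self, c.getVert_zero]

theorem exists_walk_getVert_mod (hc : c.IsCycle) (p : ℕ → ℕ) (L : ℕ) (hp0 : p 0 = 0)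
    (hstep : ∀ i < L, p (i + 1) = p i + 1 ∨ p i = p (i + 1) + 1) (hpL : c.length ∣ p L) :
    ∃ W : G.Walk v v, W.length = L ∧ ∀ i ≤ L, W.getVert i = c.getVert (p i % c.length) := by
  obtain ⟨W, hlen, hW⟩ := exists_walk_getVert_eq (G := G) (fun i => c.getVert (p i % c.length)) L
    fun i hi => by
      rcases hstep i hi with h | h
      · rw [h]; exact hc.adj_getVert_mod_succ _
      · rw [h]; exact (hc.adj_getVert_mod_succ _).symm
  refine ⟨W.copy (by simp [hp0]) (by simp [Nat.mod_eq_zero_of_dvd hpL]),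
    by simpa using hlen, fun i hi => by simpa using hW i hi⟩

theorem not_isKRepeating_of_not_modEq (hc : c.IsCycle) {k j : ℕ} (hj : 2 ≤ j) (p : ℕ → ℕ)
    (hp0 : p 0 = 0) (hstep : ∀ i < j * k, p (i + 1) = p i + 1 ∨ p i = p (i + 1) + 1)
    (hpL : c.length ∣ p (j * k))
    (hsep : ∀ i l, 0 < l → k ∣ l → l < j * k → i + l ≤ j * k → ¬ p i ≡ p (i + l) [MOD c.length]) :
    ¬ IsKRepeating G k := by
  intro hrep
  obtain ⟨W, hlen, hW⟩ := hc.exists_walk_getVert_mod p (j * k) hp0 hstep hpL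
  obtain ⟨i, l, hl, hkl, hlW, hilW, heq⟩ := hrep v W j hj hlen
  rw [hlen] at hlW hilW
  refine hsep i l hl hkl hlW hilW (hc.getVert_mod_eq_iff.mp ?_)
  rwa [← hW i (by omega), ← hW (i + l) hilW]

theorem not_isKRepeating_of_not_dvd (hc : c.IsCycle) {k : ℕ} (hk : ¬ c.length ∣ k) :
    ¬ IsKRepeating G k := by
  set L := Nat.lcm c.length k
  have hkL : L / k * k = L := Nat.div_mul_cancel (Nat.dvd_lcm_right _ _)
  have hL0 : 0 < L := Nat.lcm_pos (by have := hc.three_le_length; omega)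
    (Nat.pos_of_ne_zero fun h => hk (h ▸ dvd_zero _))
  have hLk : L ≠ k := fun h => hk (h ▸ Nat.dvd_lcm_left _ _)
  have hj : 2 ≤ L / k := by
    by_contra! h
    interval_cases L / k <;> omega
  refine hc.not_isKRepeating_of_not_modEq hj id rfl (fun i _ => .inl rfl)
    (by simpa [hkL] using Nat.dvd_lcm_left c.length k) fun i l hl hkl hlL _ hmod => ?_
  have hnl : c.length ∣ l := by simpa using (Nat.modEq_iff_dvd' (Nat.le_add_right i l)).mp hmod
  have := Nat.le_of_dvd hl (Nat.lcm_dvd hnl hkl)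
  omega

theorem not_isKRepeating_of_dvd (hc : c.IsCycle) {k : ℕ} (hk : c.length ∣ k) (hk2 : Even k)
    (hk0 : 0 < k) : ¬ IsKRepeating G k := by
  set N := Nat.lcm 2 c.length
  have h3 := hc.three_le_length
  have hN2 : 2 ∣ N := Nat.dvd_lcm_left _ _
  have hNn : c.length ∣ N := Nat.dvd_lcm_right _ _
  have hNk : N ≤ k := Nat.le_of_dvd hk0 (Nat.lcm_dvd (even_iff_two_dvd.mp hk2) hk)
  have hN4 : 4 ≤ N := by
    have := Nat.le_of_dvd (Nat.lcm_pos two_pos (by omega)) hNn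
    obtain ⟨t, ht⟩ := hN2
    omega
  refine hc.not_isKRepeating_of_not_modEq le_rfl (zigzagClimb k N) rfl
    (fun _ hi => zigzagClimb_succ hk2 (by omega) hi)
    (by rwa [zigzagClimb_two_mul hk2 (even_iff_two_dvd.mpr hN2) (by omega) hNk])
    fun i l hl hkl hlL _ hmod => ?_
  have hlk : l = k := by
    obtain ⟨t, rfl⟩ := hkl
    have : t < 2 := Nat.lt_of_mul_lt_mul_left (a := k) (by omega)
    interval_cases t <;> omega
  subst l
  obtain ⟨d, hd, hd0, hdN, hd2⟩ := exists_zigzagClimb_add_self hk2 hk0 hN4 (by omega : i ≤ k)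
  rw [hd] at hmod
  have hnd : c.length ∣ d := by simpa using (Nat.modEq_iff_dvd' (Nat.le_add_right _ d)).mp hmod
  have := Nat.le_of_dvd hd0 (Nat.lcm_dvd hd2 hnd)
  omega

end Walk.IsCycle
end SimpleGraph

/-- any graph containing a cycle fails to be `2s`-repeating for every
positive integer `s`. -/
theorem cycle_not_kRepeating {V : Type*} (G : SimpleGraph V)
    (hcyc : ∃ (v : V) (c : G.Walk v v), c.IsCycle) :
    ∀ s : ℕ, 1 ≤ s → ¬ IsKRepeating G (2 * s) := by
  obtain ⟨v, c, hc⟩ := hcyc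
  intro s hs
  by_cases hdvd : c.length ∣ 2 * s
  · exact hc.not_isKRepeating_of_dvd hdvd (even_two_mul s) (by omega)
  · exact hc.not_isKRepeating_of_not_dvd hdvd
end

section
/- If the bipartite graph of A ∈ ℝ^{n×m} is a forest, then for all A_1, A_2 in the qualitative class of A, the product A_1 A_2^T is diagonally similar to a positive semidefinite matrix; in particular all eigenvalues of A_1 A_2^T are real and nonnegative. -/
/-!
Since `Γ_A` is a forest, the positive ratios `A₂ i j / A₁ i j` on its edges factor as `d i * e j`:
solving `log d i + log e j = log (A₂ i j / A₁ i j)` leaf by leaf never meets a conflicting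
constraint. Hence `A₂ = D A₁ E` with `D`, `E` positive diagonal, and with `M = D^{1/2} A₁ E^{1/2}`
we get `A₁ A₂ᵀ = A₁ E A₁ᵀ D = D^{-1/2} (M Mᵀ) D^{1/2}`. Conjugation preserves the characteristic
polynomial, and the roots of that of the positive semidefinite `M Mᵀ` are its eigenvalues, all `≥ 0`.
-/

open Matrix

/-- The qualitative class of a real matrix: matrices with the same sign pattern. -/
def Qual {n m : ℕ} (A : Matrix (Fin n) (Fin m) ℝ) : Set (Matrix (Fin n) (Fin m) ℝ) :=
  {B | ∀ i j, Real.sign (B i j) = Real.sign (A i j)}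

/-- The bipartite graph `Γ_A` of a matrix `A`. -/
def bipartiteGraph {n m : ℕ} (A : Matrix (Fin n) (Fin m) ℝ) : SimpleGraph (Fin n ⊕ Fin m) :=
  SimpleGraph.fromRel (fun x y => ∃ i j, x = Sum.inl i ∧ y = Sum.inr j ∧ A i j ≠ 0)

/-- `M` has real nonnegative spectrum. -/
def MemPS {n : ℕ} (M : Matrix (Fin n) (Fin n) ℝ) : Prop :=
  ∀ z : ℂ, ((M.charpoly).map (algebraMap ℝ ℂ)).IsRoot z → ∃ x : ℝ, 0 ≤ x ∧ z = x

namespace SimpleGraph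

variable {V : Type*} {G : SimpleGraph V}

theorem IsAcyclic.exists_adj_forall_adj_eq [Finite V] (hG : G.IsAcyclic) {u v : V}
    (huv : G.Adj u v) : ∃ a b, G.Adj a b ∧ ∀ c, G.Adj a c → c = b := by
  have : Nonempty V := ⟨u⟩
  -- the first vertex of a longest path is a leaf
  obtain ⟨a, _, p, hp, hmax⟩ := Walk.exists_isPath_forall_isPath_length_le_length G
  have hnil : ¬p.Nil := by
    intro h
    have := hmax _ _ (Walk.cons huv .nil) (by simp [huv.ne])
    simp [h.length_eq_zero] at this
  refine ⟨a, p.snd, p.adj_snd hnil, fun c hc => hG.eq_snd_of_adj_start hp hc ?_⟩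
  by_contra hcp
  have := hmax _ _ _ (hp.cons (h := hc.symm) hcp)
  simp at this

theorem IsAcyclic.exists_add_eq {α : Type*} [AddCommGroup α] [Finite V] (hG : G.IsAcyclic)
    (w : Sym2 V → α) : ∃ f : V → α, ∀ ⦃u v⦄, G.Adj u v → f u + f v = w s(u, v) := by
  induction G using WellFoundedLT.induction with
  | _ G ih =>
  classical
  by_cases hedge : ∃ u v, G.Adj u v
  swap
  · exact ⟨0, fun u v huv => (hedge ⟨u, v, huv⟩).elim⟩
  obtain ⟨u, v, huv⟩ := hedge
  obtain ⟨a, b, hab, hleaf⟩ := hG.exists_adj_forall_adj_eq huv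
  have hlt : G.deleteEdges {s(a, b)} < G :=
    lt_of_le_of_ne (deleteEdges_le _) fun h => by
      have := h.symm ▸ hab
      simp at this
  obtain ⟨f, hf⟩ := ih _ hlt (hG.anti hlt.le)
  -- `a` is a leaf, so its value is constrained only by the edge `s(a, b)`
  refine ⟨Function.update f a (w s(a, b) - f b), fun x y hxy => ?_⟩
  by_cases hxa : x = a
  · subst hxa
    obtain rfl := hleaf y hxy
    simp [hab.ne']
  by_cases hya : y = a
  · subst hya
    obtain rfl := hleaf x hxy.symm
    simp [hab.ne', Sym2.eq_swap]
  simpa [hxa, hya] using hf (u := x) (v := y) (by simp [hxy, hxa, hya])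

end SimpleGraph

theorem Real.div_pos_of_sign_eq {x y : ℝ} (hx : x ≠ 0) (h : Real.sign x = Real.sign y) :
    0 < y / x := by
  rcases hx.lt_or_gt with hx | hx <;> rcases lt_trichotomy y 0 with hy | rfl | hy <;>
    simp_all [Real.sign_of_neg, Real.sign_of_pos, div_pos_of_neg_of_neg] <;> norm_num at h

theorem Matrix.PosSemidef.memPS {n : ℕ} {N : Matrix (Fin n) (Fin n) ℝ} (hN : N.PosSemidef) :
    MemPS N := by
  intro z hz
  rw [hN.isHermitian.charpoly_eq, Polynomial.map_prod] at hz
  simp [Polynomial.IsRoot, Polynomial.eval_prod, Finset.prod_eq_zero_iff, sub_eq_zero] at hz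
  obtain ⟨i, rfl⟩ := hz
  exact ⟨_, hN.eigenvalues_nonneg i, rfl⟩

theorem memPS_units_conj_iff {n : ℕ} (U : (Matrix (Fin n) (Fin n) ℝ)ˣ)
    (N : Matrix (Fin n) (Fin n) ℝ) : MemPS (U.val * N * U.val⁻¹) ↔ MemPS N := by
  simp only [MemPS, charpoly_units_conj]

theorem Matrix.exists_diagonal_conj_mul_transpose {ι κ : Type*} [Fintype ι] [DecidableEq ι]
    [Fintype κ] [DecidableEq κ] (B : Matrix ι κ ℝ) {d : ι → ℝ} {e : κ → ℝ}
    (hd : ∀ i, 0 < d i) (he : ∀ j, 0 ≤ e j) :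
    ∃ (P : ι → ℝ) (M : Matrix ι κ ℝ), (∀ i, 0 < P i) ∧
      B * (diagonal d * B * diagonal e)ᵀ = diagonal P * (M * Mᵀ) * (diagonal P)⁻¹ := by
  set s : ι → ℝ := fun i => √(d i)
  have hs : ∀ i, 0 < s i := fun i => Real.sqrt_pos.2 (hd i)
  have hinv : (diagonal s⁻¹)⁻¹ = diagonal s :=
    inv_eq_left_inv (by simp [diagonal_mul_diagonal, (hs _).ne'])
  refine ⟨s⁻¹, diagonal s * B * diagonal (fun j => √(e j)), fun i => inv_pos.2 (hs i), ?_⟩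
  rw [hinv]
  ext i k
  simp only [mul_apply, diagonal_apply, transpose_apply, Pi.inv_apply, mul_ite, ite_mul, mul_zero,
    zero_mul, Finset.sum_ite_eq, Finset.sum_ite_eq', Finset.mem_univ, if_true]
  rw [Finset.mul_sum, Finset.sum_mul]
  refine Finset.sum_congr rfl fun j _ => ?_
  have hsk : s k * s k = d k := Real.mul_self_sqrt (hd k).le
  have hej : √(e j) * √(e j) = e j := Real.mul_self_sqrt (he j)
  field_simp [(hs i).ne']
  linear_combination (B i j * B k j) * (e j * hsk.symm + s k * s k * hej.symm)

theorem bipartiteGraph_adj_inl_inr {n m : ℕ} (A : Matrix (Fin n) (Fin m) ℝ) (i : Fin n)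
    (j : Fin m) : (bipartiteGraph A).Adj (.inl i) (.inr j) ↔ A i j ≠ 0 := by
  simp [bipartiteGraph]

theorem exists_add_eq_of_isAcyclic_bipartiteGraph {n m : ℕ} {A : Matrix (Fin n) (Fin m) ℝ}
    (hA : (bipartiteGraph A).IsAcyclic) {α : Type*} [AddCommGroup α]
    (R : Matrix (Fin n) (Fin m) α) :
    ∃ (a : Fin n → α) (b : Fin m → α), ∀ i j, A i j ≠ 0 → a i + b j = R i j := by
  let g : Fin n ⊕ Fin m → Fin n ⊕ Fin m → α := fun u v =>
    match u, v with
    | .inl i, .inr j | .inr j, .inl i => R i j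
    | _, _ => 0
  obtain ⟨f, hf⟩ := hA.exists_add_eq (Sym2.lift ⟨g, by rintro (_ | _) (_ | _) <;> rfl⟩)
  exact ⟨f ∘ .inl, f ∘ .inr, fun i j hij => hf ((bipartiteGraph_adj_inl_inr A i j).2 hij)⟩

theorem exists_eq_diagonal_mul_diagonal_of_mem_Qual {n m : ℕ} {A : Matrix (Fin n) (Fin m) ℝ}
    (hA : (bipartiteGraph A).IsAcyclic) {A₁ A₂ : Matrix (Fin n) (Fin m) ℝ} (h₁ : A₁ ∈ Qual A)
    (h₂ : A₂ ∈ Qual A) : ∃ (d : Fin n → ℝ) (e : Fin m → ℝ), (∀ i, 0 < d i) ∧ (∀ j, 0 < e j) ∧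
      A₂ = diagonal d * A₁ * diagonal e := by
  obtain ⟨a, b, hab⟩ :=
    exists_add_eq_of_isAcyclic_bipartiteGraph hA (of fun i j => Real.log (A₂ i j / A₁ i j))
  refine ⟨fun i => Real.exp (a i), fun j => Real.exp (b j), fun _ => Real.exp_pos _,
    fun _ => Real.exp_pos _, ?_⟩
  ext i j
  have hzero : ∀ B ∈ Qual A, B i j = 0 ↔ A i j = 0 := fun B hB => by
    rw [← Real.sign_eq_zero_iff, hB i j, Real.sign_eq_zero_iff]
  rw [mul_diagonal, diagonal_mul]
  by_cases hij : A i j = 0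
  · simp [(hzero _ h₁).2 hij, (hzero _ h₂).2 hij]
  have h1 : A₁ i j ≠ 0 := mt (hzero _ h₁).1 hij
  have hpos : 0 < A₂ i j / A₁ i j := Real.div_pos_of_sign_eq h1 ((h₁ i j).trans (h₂ i j).symm)
  rw [mul_right_comm, ← Real.exp_add, hab i j hij, of_apply, Real.exp_log hpos,
    div_mul_cancel₀ _ h1]

/-- if `Γ_A` is a forest then for all `A₁, A₂ ∈ Q(A)`, the product `A₁A₂ᵀ`
is diagonally similar to a positive semidefinite matrix (one of the form `M Mᵀ`); in
particular all its eigenvalues are real and nonnegative. -/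
theorem forest_prod_diagonally_similar_psd {n m : ℕ} (A : Matrix (Fin n) (Fin m) ℝ)
    (hA : (bipartiteGraph A).IsAcyclic) :
    ∀ A₁ ∈ Qual A, ∀ A₂ ∈ Qual A,
      (∃ (P : Fin n → ℝ) (M : Matrix (Fin n) (Fin m) ℝ), (∀ i, 0 < P i) ∧
        A₁ * A₂ᵀ = Matrix.diagonal P * (M * Mᵀ) * (Matrix.diagonal P)⁻¹) ∧
      MemPS (A₁ * A₂ᵀ) := by
  intro A₁ h₁ A₂ h₂
  obtain ⟨d, e, hd, he, rfl⟩ := exists_eq_diagonal_mul_diagonal_of_mem_Qual hA h₁ h₂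
  obtain ⟨P, M, hP, hsim⟩ := A₁.exists_diagonal_conj_mul_transpose hd fun j => (he j).le
  refine ⟨⟨P, M, hP, hsim⟩, ?_⟩
  have hunit : IsUnit (diagonal P) :=
    isUnit_diagonal.2 (Pi.isUnit_iff.2 fun i => (hP i).ne'.isUnit)
  rw [hsim, ← hunit.unit_spec, memPS_units_conj_iff]
  simpa using (posSemidef_self_mul_conjTranspose M).memPS
end
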